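/- arXiv:2303.04321 — 4 statements merged into one kernel-verified Lean document; each statement's English description precedes it below -/
import Mathlib

section
/- Assume σA² > 0, σcov² > 0, σrec² > 0 and σcov² > 4σrec². Then Ψ := σcov⁴·(σA² + σcov² − 2σrec²)·(σcov² − 2σrec²)·σrec²·(σA² + 2σrec²) is strictly positive, and the number Υ := (σcov²·(σcov² − 2σrec²)·(σA² + 2σrec²) − √(2Ψ)) / (σA²·(σcov² − 4σrec²)·(σcov² − 2σrec²)) satisfies 0 < Υ < 1. -/
/-- Ψ as in Proposition 2: `a`, `c`, `r` stand for σA², σcov², σrec². -/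
noncomputable def Psi (a c r : ℝ) : ℝ :=
  c ^ 2 * (a + c - 2 * r) * (c - 2 * r) * r * (a + 2 * r)

/-- Υ, the candidate optimal power-splitting ratio. -/
noncomputable def Upsilon (a c r : ℝ) : ℝ :=
  (c * (c - 2 * r) * (a + 2 * r) - Real.sqrt (2 * Psi a c r)) /
    (a * (c - 4 * r) * (c - 2 * r))

/-!
Write `Υ = (X - √(2Ψ)) / D` with `X = c (c - 2r) (a + 2r)` and `D = a (c - 4r) (c - 2r)`.
Then `0 < Υ < 1` amounts to `(X - D)² < 2Ψ < X²` (with `0 ≤ X - D < X`), and both gaps factor: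
`X² - 2Ψ = a c² (c - 4r) (c - 2r) (a + 2r)` and `2Ψ - (X - D)² = 2 a r (a + c) (c - 2r) (c - 4r)²`,
which are positive as soon as `0 < 4r < c`.
-/

theorem sub_sqrt_div_mem_Ioo {X D s : ℝ} (hD : 0 < D) (hXD : 0 ≤ X - D)
    (hlo : (X - D) ^ 2 < s) (hhi : s < X ^ 2) :
    (X - Real.sqrt s) / D ∈ Set.Ioo 0 1 := by
  have hsqrt_lt : Real.sqrt s < X := (Real.sqrt_lt' (by linarith)).2 hhi
  have hlt_sqrt : X - D < Real.sqrt s := (Real.lt_sqrt hXD).2 hlo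
  exact ⟨div_pos (sub_pos.2 hsqrt_lt) hD, (div_lt_one hD).2 (by linarith)⟩

section

variable {a c r : ℝ}

theorem Psi_pos (ha : 0 < a) (hc : 0 < c) (hr : 0 < r) (h4 : 4 * r < c) : 0 < Psi a c r := by
  have : 0 < c - 2 * r := by linarith
  have : 0 < a + c - 2 * r := by linarith
  unfold Psi
  positivity

theorem sq_sub_two_mul_Psi :
    (c * (c - 2 * r) * (a + 2 * r)) ^ 2 - 2 * Psi a c r =
      a * c ^ 2 * (c - 4 * r) * (c - 2 * r) * (a + 2 * r) := by
  unfold Psi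
  ring

theorem two_mul_Psi_sub_sq :
    2 * Psi a c r - (c * (c - 2 * r) * (a + 2 * r) - a * (c - 4 * r) * (c - 2 * r)) ^ 2 =
      2 * a * r * (a + c) * (c - 2 * r) * (c - 4 * r) ^ 2 := by
  unfold Psi
  ring

end

/-- under σA², σcov², σrec² > 0 and σcov² > 4σrec², Ψ > 0 and 0 < Υ < 1. -/
theorem stmt_0 (a c r : ℝ) (ha : 0 < a) (hc : 0 < c) (hr : 0 < r)
    (h4 : 4 * r < c) :
    0 < Psi a c r ∧ 0 < Upsilon a c r ∧ Upsilon a c r < 1 := by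
  have h4r : 0 < c - 4 * r := by linarith
  have h2r : 0 < c - 2 * r := by linarith
  have hD : 0 < a * (c - 4 * r) * (c - 2 * r) := by positivity
  have hXD : 0 ≤ c * (c - 2 * r) * (a + 2 * r) - a * (c - 4 * r) * (c - 2 * r) := by
    rw [show c * (c - 2 * r) * (a + 2 * r) - a * (c - 4 * r) * (c - 2 * r) =
      2 * r * (c - 2 * r) * (c + 2 * a) by ring]
    positivity
  have hlo : 0 < 2 * Psi a c r -
      (c * (c - 2 * r) * (a + 2 * r) - a * (c - 4 * r) * (c - 2 * r)) ^ 2 := by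
    rw [two_mul_Psi_sub_sq]
    positivity
  have hhi : 0 < (c * (c - 2 * r) * (a + 2 * r)) ^ 2 - 2 * Psi a c r := by
    rw [sq_sub_two_mul_Psi]
    positivity
  obtain ⟨hpos, hlt_one⟩ := sub_sqrt_div_mem_Ioo hD hXD (sub_pos.1 hlo) (sub_pos.1 hhi)
  exact ⟨Psi_pos ha hc hr h4, hpos, hlt_one⟩
end

section
/- Assume σA² > 0, σcov² > 0, σrec² > 0 and σcov² > 4σrec². Then the function s has derivative zero at ρ = Υ, i.e., s is differentiable at Υ and s′(Υ) = 0. -/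
/-- The ρ-dependent factor `s(ρ)` of the high-SNR mutual information. -/
noncomputable def s (a c r : ℝ) (ρ : ℝ) : ℝ :=
  (c / ρ + a) *
    (a + ((c / ρ) * (2 * r / (1 - ρ))) / ((c / ρ) + (2 * r / (1 - ρ))))

open Filter Topology

noncomputable def critQuadratic (a c r ρ : ℝ) : ℝ :=
  a * (c - 4 * r) * (c - 2 * r) * ρ ^ 2 - 2 * (c * (c - 2 * r) * (a + 2 * r)) * ρ +
    c ^ 2 * (a + 2 * r)

section

variable {a c r ρ : ℝ}

lemma s_eq_of_ne (h0 : ρ ≠ 0) (h1 : ρ ≠ 1) :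
    s a c r ρ = (c / ρ + a) * (a + 2 * r * c / (c * (1 - ρ) + 2 * r * ρ)) := by
  have h1' : 1 - ρ ≠ 0 := sub_ne_zero.mpr h1.symm
  unfold s
  congr 2
  field_simp

lemma s_eventuallyEq (h0 : ρ ≠ 0) (h1 : ρ ≠ 1) :
    s a c r =ᶠ[𝓝 ρ] fun x ↦ (c / x + a) * (a + 2 * r * c / (c * (1 - x) + 2 * r * x)) := by
  filter_upwards [eventually_ne_nhds h0, eventually_ne_nhds h1] with x hx0 hx1
  exact s_eq_of_ne hx0 hx1

lemma hasDerivAt_s (h0 : ρ ≠ 0) (h1 : ρ ≠ 1) (hK : c * (1 - ρ) + 2 * r * ρ ≠ 0) :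
    HasDerivAt (s a c r)
      (-c * critQuadratic a c r ρ / (ρ * (c * (1 - ρ) + 2 * r * ρ)) ^ 2) ρ := by
  have hinv : HasDerivAt (fun x ↦ c / x + a) (-c / ρ ^ 2) ρ := by
    simpa [div_eq_mul_inv] using ((hasDerivAt_inv h0).const_mul c).add_const a
  have hK' : HasDerivAt (fun x ↦ c * (1 - x) + 2 * r * x) (2 * r - c) ρ := by
    have h : (fun x ↦ c * (1 - x) + 2 * r * x) = fun x ↦ c + (2 * r - c) * x := by
      ext x; ring
    simpa [h] using ((hasDerivAt_id' ρ).const_mul (2 * r - c)).const_add c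
  have hfrac := ((hasDerivAt_const ρ (2 * r * c)).fun_div hK' hK).const_add a
  refine ((hinv.mul hfrac).congr_of_eventuallyEq (s_eventuallyEq h0 h1)).congr_deriv ?_
  unfold critQuadratic
  generalize hKdef : c * (1 - ρ) + 2 * r * ρ = K at hK ⊢
  field_simp
  subst hKdef
  ring

end

lemma Psi_nonneg {a c r : ℝ} (ha : 0 ≤ a) (hr : 0 ≤ r) (hrc : 2 * r ≤ c) : 0 ≤ Psi a c r := by
  have : 0 ≤ c - 2 * r := by linarith
  unfold Psi
  have : 0 ≤ a + c - 2 * r := by linarith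
  positivity

lemma critQuadratic_Upsilon {a c r : ℝ} (ha : 0 < a) (hr : 0 < r) (h4 : 4 * r < c) :
    critQuadratic a c r (Upsilon a c r) = 0 := by
  have hA : a * (c - 4 * r) * (c - 2 * r) ≠ 0 := by
    have : 0 < c - 4 * r := by linarith
    have : 0 < c - 2 * r := by linarith
    positivity
  have hsq := Real.mul_self_sqrt (mul_nonneg zero_le_two (Psi_nonneg ha.le hr.le (by linarith)))
  have hdisc : discrim (a * (c - 4 * r) * (c - 2 * r)) (-2 * (c * (c - 2 * r) * (a + 2 * r)))
      (c ^ 2 * (a + 2 * r)) = (-2 * √(2 * Psi a c r)) * (-2 * √(2 * Psi a c r)) := by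
    unfold discrim
    unfold Psi at hsq ⊢
    linear_combination (-4) * hsq
  have hroot := (quadratic_eq_zero_iff hA hdisc (Upsilon a c r)).mpr <| .inl <| by
    unfold Upsilon
    field_simp
    ring
  rw [← hroot, critQuadratic]
  ring

lemma critQuadratic_ne_zero_at_poles {a c r x : ℝ} (ha : 0 < a) (hc : 0 < c) (hr : 0 < r)
    (h4 : 4 * r < c) (hx : critQuadratic a c r x = 0) :
    x ≠ 0 ∧ x ≠ 1 ∧ c * (1 - x) + 2 * r * x ≠ 0 := by
  unfold critQuadratic at hx
  refine ⟨?_, ?_, fun hK ↦ ?_⟩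
  · rintro rfl
    have : 0 < c ^ 2 * (a + 2 * r) := by positivity
    linarith
  · rintro rfl
    have : 0 < 2 * r * (c - 4 * r) * (a + c) := by
      have : 0 < c - 4 * r := by linarith
      positivity
    linarith
  · have : 2 * r * c ^ 2 * (a + c - 2 * r) = 0 := by
      linear_combination (-(c - 2 * r)) * hx -
        (a * (c - 4 * r) * ((c - 2 * r) * x + c) - 2 * c * (c - 2 * r) * (a + 2 * r)) * hK
    have : 0 < a + c - 2 * r := by linarith
    have : 0 < 2 * r * c ^ 2 * (a + c - 2 * r) := by positivity
    linarith

/-- s is differentiable at Υ with derivative zero. -/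
theorem stmt_1 (a c r : ℝ) (ha : 0 < a) (hc : 0 < c) (hr : 0 < r)
    (h4 : 4 * r < c) :
    HasDerivAt (s a c r) 0 (Upsilon a c r) := by
  have hQ := critQuadratic_Upsilon ha hr h4
  obtain ⟨h0, h1, hK⟩ := critQuadratic_ne_zero_at_poles ha hc hr h4 hQ
  simpa [hQ] using hasDerivAt_s (a := a) h0 h1 hK
end

section
/- Assume σA² > 0, σcov² > 0, σrec² > 0 and σcov² > 4σrec². Then the function S : ρ ↦ −(1/2)·log₂(s(ρ)) has a strict local maximum at ρ = Υ. -/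
/-- The ρ-dependent part of the high-SNR mutual information: S(ρ) = −(1/2)·log₂ s(ρ). -/
noncomputable def S (a c r : ℝ) (ρ : ℝ) : ℝ := -(1 / 2) * Real.logb 2 (s a c r ρ)

/-!
Clearing denominators, `s = P/Q` on `(0,1)` with `P` and `Q` quadratic in `ρ`. Υ is the smaller
root of `A ρ² − 2Bρ + C` (with `A = a(c−4r)(c−2r)`, `B = c(a+2r)(c−2r)`, `C = c²(a+2r)`,
so that `B² − AC = 2Ψ`), and at such a root `P(ρ)Q(Υ) − P(Υ)Q(ρ)` is a positive multiple
of `(ρ − Υ)²`. Hence Υ is a strict minimiser of `s` on all of `(0,1)`, and so a strict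
maximiser of `S = −½ log₂ s`.
-/

open Set

lemma quadratic_sub_div_isRoot {A B C t : ℝ} (hA : A ≠ 0) (ht : t ^ 2 = B ^ 2 - A * C) :
    A * ((B - t) / A) ^ 2 - 2 * B * ((B - t) / A) + C = 0 := by
  field_simp
  linear_combination ht

/-- `(B − t)/A` is the smaller root of `A x² − 2Bx + C`, which is positive at `0` and negative
at `1`. -/
lemma quadratic_smaller_root_mem_Ioo {A B C t : ℝ} (hA : 0 < A) (hC : 0 < C) (ht : 0 ≤ t)
    (ht2 : t ^ 2 = B ^ 2 - A * C) (h1 : A - 2 * B + C < 0) : (B - t) / A ∈ Ioo 0 1 := by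
  rw [mem_Ioo, div_pos_iff_of_pos_right hA, div_lt_one hA, sub_pos, sub_lt_comm]
  constructor
  · exact (abs_lt_of_sq_lt_sq' (a := t) (b := B) (by nlinarith) (by linarith)).2
  · exact (abs_lt_of_sq_lt_sq' (a := B - A) (b := t) (by nlinarith) ht).2

namespace SplittingReceiver

def sNum (a c r ρ : ℝ) : ℝ := (c + a * ρ) * (a * c + 2 * c * r - a * (c - 2 * r) * ρ)

def sDen (c r ρ : ℝ) : ℝ := ρ * (c - (c - 2 * r) * ρ)

def upsilonQuadratic (a c r ρ : ℝ) : ℝ :=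
  a * (c - 4 * r) * (c - 2 * r) * ρ ^ 2 - 2 * (c * (a + 2 * r) * (c - 2 * r)) * ρ +
    c ^ 2 * (a + 2 * r)

lemma sDen_pos {c r ρ : ℝ} (hc : 0 < c) (hr : 0 < r) (hρ : ρ ∈ Ioo 0 1) :
    0 < sDen c r ρ := by
  obtain ⟨h0, h1⟩ := hρ
  have : 0 < c * (1 - ρ) + 2 * r * ρ := by
    have := sub_pos.mpr h1
    positivity
  exact mul_pos h0 (by linarith)

lemma sNum_pos {a c r ρ : ℝ} (ha : 0 < a) (hc : 0 < c) (hr : 0 < r) (hρ : ρ ∈ Ioo 0 1) :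
    0 < sNum a c r ρ := by
  obtain ⟨h0, h1⟩ := hρ
  have : 0 < a * c * (1 - ρ) + 2 * r * (c + a * ρ) := by
    have := sub_pos.mpr h1
    positivity
  exact mul_pos (by positivity) (by linarith)

lemma s_eq_sNum_div_sDen {a c r ρ : ℝ} (hc : 0 < c) (hr : 0 < r) (hρ : ρ ∈ Ioo 0 1) :
    s a c r ρ = sNum a c r ρ / sDen c r ρ := by
  have hden := sDen_pos hc hr hρ
  obtain ⟨h0, h1⟩ := hρ
  have h1' : 0 < 1 - ρ := sub_pos.mpr h1
  have : c / ρ + 2 * r / (1 - ρ) ≠ 0 := by positivity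
  rw [s, eq_div_iff hden.ne', sNum, sDen]
  field_simp
  ring

lemma s_pos {a c r ρ : ℝ} (ha : 0 < a) (hc : 0 < c) (hr : 0 < r) (hρ : ρ ∈ Ioo 0 1) :
    0 < s a c r ρ := by
  rw [s_eq_sNum_div_sDen hc hr hρ]
  exact div_pos (sNum_pos ha hc hr hρ) (sDen_pos hc hr hρ)

lemma sNum_mul_sDen_sub {a c r u : ℝ} (hu : upsilonQuadratic a c r u = 0) (ρ : ℝ) :
    sNum a c r ρ * sDen c r u - sNum a c r u * sDen c r ρ =
      c * (c - 2 * r) * (a * c + 2 * c * r - a * (c - 4 * r) * u) * (ρ - u) ^ 2 := by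
  unfold sNum sDen
  unfold upsilonQuadratic at hu
  linear_combination (c * (u - ρ)) * hu

lemma Psi_nonneg {a c r : ℝ} (ha : 0 ≤ a) (hr : 0 ≤ r) (hc : 2 * r ≤ c) : 0 ≤ Psi a c r := by
  have h1 : 0 ≤ a + c - 2 * r := by linarith
  have h2 : 0 ≤ c - 2 * r := by linarith
  unfold Psi
  positivity

lemma two_mul_Psi_eq (a c r : ℝ) :
    2 * Psi a c r = (c * (a + 2 * r) * (c - 2 * r)) ^ 2 -
      a * (c - 4 * r) * (c - 2 * r) * (c ^ 2 * (a + 2 * r)) := by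
  unfold Psi
  ring

lemma Upsilon_eq (a c r : ℝ) :
    Upsilon a c r = (c * (a + 2 * r) * (c - 2 * r) - √(2 * Psi a c r)) /
      (a * (c - 4 * r) * (c - 2 * r)) := by
  unfold Upsilon
  ring

lemma sq_sqrt_two_mul_Psi {a c r : ℝ} (ha : 0 < a) (hr : 0 < r) (h4 : 4 * r < c) :
    √(2 * Psi a c r) ^ 2 = (c * (a + 2 * r) * (c - 2 * r)) ^ 2 -
      a * (c - 4 * r) * (c - 2 * r) * (c ^ 2 * (a + 2 * r)) := by
  rw [Real.sq_sqrt (by linarith [Psi_nonneg ha.le hr.le (by linarith : 2 * r ≤ c)]),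
    two_mul_Psi_eq]

lemma upsilonQuadratic_Upsilon {a c r : ℝ} (ha : 0 < a) (hr : 0 < r) (h4 : 4 * r < c) :
    upsilonQuadratic a c r (Upsilon a c r) = 0 := by
  have hA : a * (c - 4 * r) * (c - 2 * r) ≠ 0 := by
    have := sub_pos.mpr h4
    have : 0 < c - 2 * r := by linarith
    positivity
  rw [upsilonQuadratic, Upsilon_eq]
  exact quadratic_sub_div_isRoot hA (sq_sqrt_two_mul_Psi ha hr h4)

lemma Upsilon_mem_Ioo {a c r : ℝ} (ha : 0 < a) (hc : 0 < c) (hr : 0 < r) (h4 : 4 * r < c) :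
    Upsilon a c r ∈ Ioo 0 1 := by
  have h4' := sub_pos.mpr h4
  have h2 : 0 < c - 2 * r := by linarith
  rw [Upsilon_eq]
  refine quadratic_smaller_root_mem_Ioo (by positivity) (by positivity) (Real.sqrt_nonneg _)
    (sq_sqrt_two_mul_Psi ha hr h4) ?_
  have : 0 < 2 * r * (a + c) * (c - 4 * r) := by positivity
  linear_combination this

lemma s_Upsilon_lt {a c r ρ : ℝ} (ha : 0 < a) (hc : 0 < c) (hr : 0 < r) (h4 : 4 * r < c)
    (hρ : ρ ∈ Ioo 0 1) (hne : ρ ≠ Upsilon a c r) :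
    s a c r (Upsilon a c r) < s a c r ρ := by
  have hu := Upsilon_mem_Ioo ha hc hr h4
  rw [s_eq_sNum_div_sDen hc hr hu, s_eq_sNum_div_sDen hc hr hρ,
    div_lt_div_iff₀ (sDen_pos hc hr hu) (sDen_pos hc hr hρ), ← sub_pos,
    sNum_mul_sDen_sub (upsilonQuadratic_Upsilon ha hr h4)]
  have hK : 0 < a * c + 2 * c * r - a * (c - 4 * r) * Upsilon a c r := by
    nlinarith [mul_lt_mul_of_pos_left hu.2 (mul_pos ha (sub_pos.mpr h4))]
  have := sub_ne_zero.mpr hne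
  have := sub_pos.mpr (by linarith : 2 * r < c)
  positivity

end SplittingReceiver

open SplittingReceiver in
/-- S(ρ) = −(1/2)·log₂ s(ρ) has a strict local maximum at ρ = Υ. -/
theorem stmt_3 (a c r : ℝ) (ha : 0 < a) (hc : 0 < c) (hr : 0 < r)
    (h4 : 4 * r < c) :
    ∃ ε > 0, ∀ ρ : ℝ, |ρ - Upsilon a c r| < ε → ρ ≠ Upsilon a c r →
      S a c r ρ < S a c r (Upsilon a c r) := by
  obtain ⟨hu0, hu1⟩ := Upsilon_mem_Ioo ha hc hr h4
  refine ⟨min (Upsilon a c r) (1 - Upsilon a c r), lt_min hu0 (sub_pos.mpr hu1), ?_⟩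
  intro ρ hρ hne
  have hρ' : ρ ∈ Ioo 0 1 := by
    obtain ⟨h1, h2⟩ := abs_lt.mp hρ
    constructor <;> linarith [min_le_left (Upsilon a c r) (1 - Upsilon a c r),
      min_le_right (Upsilon a c r) (1 - Upsilon a c r)]
  have := Real.logb_lt_logb one_lt_two (s_pos ha hc hr ⟨hu0, hu1⟩)
    (s_Upsilon_lt ha hc hr h4 hρ' hne)
  unfold S
  linarith
end

section
/- Assume σA² > 0, σcov² > 0, σrec² > 0 and σcov² > 4σrec². Then s(Υ) < (σA² + σcov²)². (Consequently the high-SNR mutual-information gain G = (1/2)·log₂((σA² + σcov²)²/s(Υ)) of the splitting receiver over the coherent-detection receiver is strictly positive.) -/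
theorem sq_add_sub_s (a c r ρ : ℝ) (hρ₀ : ρ ≠ 0) (hρ₁ : 1 - ρ ≠ 0)
    (hden : c * (1 - ρ) + 2 * r * ρ ≠ 0) :
    (a + c) ^ 2 - s a c r ρ =
      c * (1 - ρ) * ((c - 2 * r) * (2 * a + c) * ρ - c * (a + 2 * r)) /
        (ρ * (c * (1 - ρ) + 2 * r * ρ)) := by
  have hden' : c * (1 - ρ) + ρ * 2 * r ≠ 0 := by convert hden using 1; ring
  rw [s, div_add_div _ _ hρ₀ hρ₁]
  field_simp
  ring

theorem s_lt_sq_add {a c r ρ : ℝ} (hc : 0 < c) (hr : 0 < r) (hρ₀ : 0 < ρ) (hρ₁ : ρ < 1)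
    (hρ : c * (a + 2 * r) < (c - 2 * r) * (2 * a + c) * ρ) :
    s a c r ρ < (a + c) ^ 2 := by
  have h1ρ : 0 < 1 - ρ := sub_pos.2 hρ₁
  have hden : 0 < c * (1 - ρ) + 2 * r * ρ := by positivity
  rw [← sub_pos, sq_add_sub_s a c r ρ hρ₀.ne' h1ρ.ne' hden.ne']
  exact div_pos (mul_pos (mul_pos hc h1ρ) (sub_pos.2 hρ)) (mul_pos hρ₀ hden)

theorem Real.sqrt_mul_mem_Ioo {u v : ℝ} (hu : 0 < u) (huv : u < v) :
    √(u * v) ∈ Set.Ioo u v := by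
  constructor
  · rw [Real.lt_sqrt hu.le]; nlinarith
  · rw [Real.sqrt_lt' (hu.trans huv)]; nlinarith

theorem sqrt_two_mul_Psi_mem_Ioo {a c r : ℝ} (ha : 0 < a) (hr : 0 < r) (h4 : 4 * r < c) :
    √(2 * Psi a c r) ∈ Set.Ioo (2 * r * (c - 2 * r) * (2 * a + c))
      (c ^ 2 * (a + 2 * r) * (a + c - 2 * r) / (2 * a + c)) := by
  have ht : 0 < 2 * a + c := by linarith
  have hPsi : 2 * Psi a c r = 2 * r * (c - 2 * r) * (2 * a + c) *
      (c ^ 2 * (a + 2 * r) * (a + c - 2 * r) / (2 * a + c)) := by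
    rw [Psi]; field_simp
  rw [hPsi]
  apply Real.sqrt_mul_mem_Ioo
  · have : 0 < c - 2 * r := by linarith
    positivity
  · rw [lt_div_iff₀ ht]
    have : 0 < a * (a + c) * (c - 4 * r) ^ 2 := by
      have : 0 < c := by linarith
      have : 0 < c - 4 * r := by linarith
      positivity
    linear_combination this

theorem Upsilon_lt_one {a c r : ℝ} (hD : 0 < a * (c - 4 * r) * (c - 2 * r))
    (hQ : 2 * r * (c - 2 * r) * (2 * a + c) < √(2 * Psi a c r)) :
    Upsilon a c r < 1 := by
  rw [Upsilon, div_lt_one hD]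
  linear_combination hQ

theorem lt_mul_Upsilon {a c r : ℝ} (hD : 0 < a * (c - 4 * r) * (c - 2 * r))
    (hc2r : 0 < c - 2 * r) (ht : 0 < 2 * a + c)
    (hQ : √(2 * Psi a c r) < c ^ 2 * (a + 2 * r) * (a + c - 2 * r) / (2 * a + c)) :
    c * (a + 2 * r) < (c - 2 * r) * (2 * a + c) * Upsilon a c r := by
  rw [lt_div_iff₀ ht] at hQ
  rw [Upsilon, mul_div_assoc', lt_div_iff₀ hD]
  linear_combination mul_lt_mul_of_pos_left hQ hc2r

/-- s(Υ) < (σA² + σcov²)², so the high-SNR mutual-information gain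
of the splitting receiver over the CD receiver is strictly positive. -/
theorem stmt_4 (a c r : ℝ) (ha : 0 < a) (hc : 0 < c) (hr : 0 < r)
    (h4 : 4 * r < c) :
    s a c r (Upsilon a c r) < (a + c) ^ 2 := by
  have hc2r : 0 < c - 2 * r := by linarith
  have ht : 0 < 2 * a + c := by linarith
  have hD : 0 < a * (c - 4 * r) * (c - 2 * r) := by
    have : 0 < c - 4 * r := by linarith
    positivity
  obtain ⟨hQlo, hQhi⟩ := sqrt_two_mul_Psi_mem_Ioo ha hr h4
  have hΥ := lt_mul_Upsilon hD hc2r ht hQhi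
  have hΥ₀ : 0 < Upsilon a c r :=
    pos_of_mul_pos_right ((by positivity : 0 < c * (a + 2 * r)).trans hΥ) (by positivity)
  exact s_lt_sq_add hc hr hΥ₀ (Upsilon_lt_one hD hQlo) hΥ
end
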